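/- arXiv:1610.09475 — 4 statements merged into one kernel-verified Lean document; each statement's English description precedes it below -/
import Mathlib

section
/- Let n ≥ 3, ε ∈ {−1,1}^n and u, v ∈ ℂ. If there exists a nonzero (ε,u,v)-covariant symbol P ∈ ℂ[X_1,…,X_n], then v − u ∈ ℕ. (Scalar case i = j = 0 of the necessary condition in Theorem C(2).) -/
open scoped BigOperators

noncomputable section

def pd {n : ℕ} {E : Type} [NormedAddCommGroup E] [NormedSpace ℝ E]
    (j : Fin n) (f : (Fin n → ℝ) → E) : (Fin n → ℝ) → E :=
  fun x => fderiv ℝ f x (Pi.single j 1)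

def akCoeff (μ : ℂ) (ℓ k : ℕ) : ℂ :=
  ((-1 : ℂ) ^ k * 2 ^ (ℓ - 2 * k) / (Nat.factorial k * Nat.factorial (ℓ - 2 * k))) *
    ∏ j ∈ Finset.Ico ((ℓ + 1) / 2) (ℓ - k), (μ + (j : ℂ))

def sLap {n : ℕ} (ε : Fin n → ℝ) (i₀ : Fin n) (f : (Fin n → ℝ) → ℂ) : (Fin n → ℝ) → ℂ :=
  fun x => (-(ε i₀ : ℂ)) * ∑ j ∈ Finset.univ.erase i₀, (ε j : ℂ) * pd j (pd j f) x

def juhlOp {n : ℕ} (ε : Fin n → ℝ) (i₀ : Fin n) (μ : ℂ) (ℓ : ℕ)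
    (f : (Fin n → ℝ) → ℂ) : (Fin n → ℝ) → ℂ :=
  fun x => ∑ k ∈ Finset.range (ℓ / 2 + 1),
    akCoeff μ ℓ k * ((sLap ε i₀)^[k] ((pd i₀)^[ℓ - 2 * k] f)) x

def juhlSymbol {n : ℕ} (ε : Fin n → ℝ) (i₀ : Fin n) (μ : ℂ) (ℓ : ℕ) :
    MvPolynomial (Fin n) ℂ :=
  ∑ k ∈ Finset.range (ℓ / 2 + 1),
    MvPolynomial.C (akCoeff μ ℓ k) *
      (MvPolynomial.C (-(ε i₀ : ℂ)) *
        ∑ j ∈ Finset.univ.erase i₀, MvPolynomial.C ((ε j : ℂ)) * MvPolynomial.X j ^ 2) ^ k *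
      MvPolynomial.X i₀ ^ (ℓ - 2 * k)

def monoDiff {n : ℕ} (m : Fin n → ℕ) (f : (Fin n → ℝ) → ℂ) : (Fin n → ℝ) → ℂ :=
  (List.finRange n).foldr (fun j g => (pd j)^[m j] g) f

def polyDiff {n : ℕ} (P : MvPolynomial (Fin n) ℂ) (f : (Fin n → ℝ) → ℂ) :
    (Fin n → ℝ) → ℂ :=
  fun x => ∑ m ∈ P.support, P.coeff m * monoDiff (fun j => m j) f x

def IsConformalKillingPair {n : ℕ} (ε : Fin n → ℝ) (V : Set (Fin n → ℝ))
    (Z : (Fin n → ℝ) → (Fin n → ℝ)) (ρ : (Fin n → ℝ) → ℝ) : Prop :=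
  ContDiffOn ℝ (⊤ : ℕ∞) Z V ∧ ContDiffOn ℝ (⊤ : ℕ∞) ρ V ∧
    ∀ i j : Fin n, ∀ x ∈ V,
      ε i * pd j (fun y => Z y i) x + ε j * pd i (fun y => Z y j) x
        = ρ x * ε i * (if i = j then 1 else 0)

def IsCovariantSymbol {n : ℕ} (ε : Fin n → ℝ) (i₀ : Fin n) (u v : ℂ)
    (P : MvPolynomial (Fin n) ℂ) : Prop :=
  ∀ (Z : (Fin n → ℝ) → (Fin n → ℝ)) (ρ : (Fin n → ℝ) → ℝ),
    IsConformalKillingPair ε Set.univ Z ρ →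
    (∀ x : Fin n → ℝ, x i₀ = 0 → Z x i₀ = 0) →
    ∀ f : (Fin n → ℝ) → ℂ, ContDiff ℝ (⊤ : ℕ∞) f →
    ∀ x : Fin n → ℝ, x i₀ = 0 →
      polyDiff P (fun y => (∑ j, (Z y j : ℂ) * pd j f y) + u / 2 * (ρ y : ℂ) * f y) x
        = (∑ j ∈ Finset.univ.erase i₀, (Z x j : ℂ) * pd j (polyDiff P f) x)
          + v / 2 * (ρ x : ℂ) * polyDiff P f x


/-!
Test the covariance identity against the Euler field `Z(x) = x`, with `ρ = 2`: it is conformal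
Killing for every signature, tangent to every coordinate hyperplane, and vanishes at the origin.
For a monomial `x^a` Euler's identity gives `Σ x_j ∂_j x^a + (u/2)·2·x^a = (|a| + u) x^a`.
At `x = 0` the tangential term drops out because `Z(0) = 0`, and the only monomial of `P(∂)` that
survives on `x^a` is the one of exponent `a`, so the two sides become `a! · coeff_a P` times
`|a| + u` and `v` respectively. Choosing `a` in
the support of `P ≠ 0` forces `v - u = |a| ∈ ℕ`.
-/

open Finset

def monomialFun {n : ℕ} (c : ℂ) (a : Fin n → ℕ) : (Fin n → ℝ) → ℂ :=
  fun y => c * ∏ i, (y i : ℂ) ^ a i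

section Monomial

variable {n : ℕ}

theorem contDiff_monomialFun (c : ℂ) (a : Fin n → ℕ) :
    ContDiff ℝ (⊤ : ℕ∞) (monomialFun c a) :=
  contDiff_const.mul <| contDiff_prod fun i _ =>
    (Complex.ofRealCLM.contDiff.comp (contDiff_apply ℝ ℝ i)).pow (a i)

theorem prod_pow_update_sub_one (y : Fin n → ℂ) (a : Fin n → ℕ) (j : Fin n) :
    ∏ i, y i ^ Function.update a j (a j - 1) i
      = y j ^ (a j - 1) * ∏ i ∈ univ.erase j, y i ^ a i := by
  rw [← mul_prod_erase univ _ (mem_univ j), Function.update_self]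
  congr 1
  exact prod_congr rfl fun i hi => by rw [Function.update_of_ne (ne_of_mem_erase hi)]

theorem pd_monomialFun (c : ℂ) (a : Fin n → ℕ) (j : Fin n) :
    pd j (monomialFun c a) = monomialFun (c * a j) (Function.update a j (a j - 1)) := by
  funext y
  have hcoord : ∀ i, HasFDerivAt (fun x : Fin n → ℝ => ((x i : ℝ) : ℂ))
      (Complex.ofRealCLM.comp (ContinuousLinearMap.proj i)) y :=
    fun i => (Complex.ofRealCLM.comp
      (ContinuousLinearMap.proj (R := ℝ) (φ := fun _ : Fin n => ℝ) i)).hasFDerivAt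
  have hprod := HasFDerivAt.finsetProd (u := univ)
    (g := fun i (x : Fin n → ℝ) => (x i : ℂ) ^ a i) fun i _ =>
      (hasDerivAt_pow (a i) (y i : ℂ)).comp_hasFDerivAt (f := fun x : Fin n → ℝ => (x i : ℂ))
        y (hcoord i)
  have hmon : HasFDerivAt (monomialFun c a) _ y := hprod.const_mul c
  rw [pd, hmon.fderiv, monomialFun, prod_pow_update_sub_one]
  simp only [smul_apply, _root_.sum_apply,
    ContinuousLinearMap.comp_apply, ContinuousLinearMap.proj_apply, Pi.single_apply, apply_ite,
    Complex.ofRealCLM_apply, Complex.ofReal_one, Complex.ofReal_zero, smul_eq_mul, mul_one,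
    mul_zero, sum_ite_eq', mem_univ, ↓reduceIte]
  ring

theorem iterate_pd_monomialFun (c : ℂ) (a : Fin n → ℕ) (j : Fin n) (k : ℕ) :
    (pd j)^[k] (monomialFun c a)
      = monomialFun (c * (a j).descFactorial k) (Function.update a j (a j - k)) := by
  induction k with
  | zero => simp
  | succ k ih =>
    rw [Function.iterate_succ_apply', ih, pd_monomialFun, Function.update_idem,
      Function.update_self, Nat.descFactorial_succ, Nat.sub_sub]
    push_cast
    ring_nf

theorem foldr_iterate_pd_monomialFun (m : Fin n → ℕ) {L : List (Fin n)} (hL : L.Nodup)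
    (c : ℂ) (a : Fin n → ℕ) :
    L.foldr (fun j g => (pd j)^[m j] g) (monomialFun c a)
      = monomialFun (c * ∏ j ∈ L.toFinset, (a j).descFactorial (m j))
          (fun i => if i ∈ L then a i - m i else a i) := by
  induction L with
  | nil => simp
  | cons j L ih =>
    obtain ⟨hj, hL⟩ := List.nodup_cons.mp hL
    rw [List.foldr_cons, ih hL, iterate_pd_monomialFun, if_neg hj,
      List.toFinset_cons, prod_insert (by simpa using hj)]
    congr 1
    · push_cast
      ring
    · funext i
      by_cases hij : i = j <;> simp [hij]

theorem monoDiff_monomialFun (m : Fin n → ℕ) (c : ℂ) (a : Fin n → ℕ) :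
    monoDiff m (monomialFun c a) = monomialFun (c * ∏ j, (a j).descFactorial (m j)) (a - m) := by
  simpa [monoDiff, List.toFinset_finRange, Pi.sub_def] using
    foldr_iterate_pd_monomialFun m (List.nodup_finRange n) c a

theorem monomialFun_zero_apply_zero (c : ℂ) : monomialFun c (0 : Fin n → ℕ) 0 = c := by
  simp [monomialFun]

theorem monomialFun_apply_zero_of_ne_zero (c : ℂ) {a : Fin n → ℕ} (ha : a ≠ 0) :
    monomialFun c a 0 = 0 := by
  obtain ⟨i, hi⟩ := Function.ne_iff.mp ha
  simp [monomialFun, prod_eq_zero (mem_univ i), zero_pow hi]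

theorem monoDiff_monomialFun_apply_zero (m : Fin n → ℕ) (c : ℂ) (a : Fin n → ℕ) :
    monoDiff m (monomialFun c a) 0 = if m = a then c * ∏ j, ((a j).factorial : ℂ) else 0 := by
  rw [monoDiff_monomialFun]
  split_ifs with hma
  · simp [hma, monomialFun_zero_apply_zero, Nat.descFactorial_self]
  · obtain ⟨j, hj⟩ := Function.ne_iff.mp hma
    rcases lt_or_gt_of_ne hj with h | h
    · exact monomialFun_apply_zero_of_ne_zero _ (Function.ne_iff.mpr ⟨j, Nat.sub_ne_zero_of_lt h⟩)
    · simp [monomialFun, prod_eq_zero (mem_univ j), Nat.descFactorial_eq_zero_iff_lt.mpr h]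

theorem polyDiff_monomialFun_apply_zero (P : MvPolynomial (Fin n) ℂ) (c : ℂ) (a : Fin n →₀ ℕ) :
    polyDiff P (monomialFun c a) 0 = P.coeff a * c * ∏ j, ((a j).factorial : ℂ) := by
  rw [polyDiff, sum_eq_single a]
  · rw [monoDiff_monomialFun_apply_zero, if_pos rfl, mul_assoc]
  · intro m _ hma
    rw [monoDiff_monomialFun_apply_zero, if_neg (fun h => hma (DFunLike.coe_injective h)),
      mul_zero]
  · intro ha
    rw [MvPolynomial.notMem_support_iff.mp ha, zero_mul]

theorem coord_mul_pd_monomialFun (c : ℂ) (a : Fin n → ℕ) (j : Fin n) (y : Fin n → ℝ) :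
    (y j : ℂ) * pd j (monomialFun c a) y = a j * monomialFun c a y := by
  rcases Nat.eq_zero_or_pos (a j) with h | h
  · simp [pd_monomialFun, h, monomialFun]
  · rw [pd_monomialFun, monomialFun, monomialFun, prod_pow_update_sub_one,
      ← mul_prod_erase univ _ (mem_univ j), ← pow_sub_one_mul h.ne']
    ring

theorem sum_coord_mul_pd_monomialFun (c : ℂ) (a : Fin n → ℕ) (y : Fin n → ℝ) :
    ∑ j, (y j : ℂ) * pd j (monomialFun c a) y = (∑ j, a j : ℕ) * monomialFun c a y := by
  simp_rw [coord_mul_pd_monomialFun, ← sum_mul]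
  push_cast
  rfl

end Monomial

theorem pd_apply_coord {n : ℕ} (i j : Fin n) (x : Fin n → ℝ) :
    pd j (fun y : Fin n → ℝ => y i) x = if i = j then 1 else 0 := by
  simp [pd, fderiv_apply, Pi.single_apply]

theorem isConformalKillingPair_id {n : ℕ} (ε : Fin n → ℝ) :
    IsConformalKillingPair ε Set.univ (fun y => y) (fun _ => 2) := by
  refine ⟨contDiff_id.contDiffOn, contDiffOn_const, fun i j x _ => ?_⟩
  rw [pd_apply_coord, pd_apply_coord]
  rcases eq_or_ne i j with rfl | h
  · simp only [↓reduceIte]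
    ring
  · simp [h, h.symm]

theorem IsCovariantSymbol.sub_eq_degree_of_mem_support {n : ℕ} {ε : Fin n → ℝ} {i₀ : Fin n}
    {u v : ℂ} {P : MvPolynomial (Fin n) ℂ} (hcov : IsCovariantSymbol ε i₀ u v P)
    {a : Fin n →₀ ℕ} (ha : a ∈ P.support) : v - u = (∑ j, a j : ℕ) := by
  have h := hcov (fun y => y) (fun _ => 2) (isConformalKillingPair_id ε) (fun _ h => h)
    (monomialFun 1 a) (contDiff_monomialFun 1 a) 0 rfl
  have euler : (fun y : Fin n → ℝ => (∑ j, (y j : ℂ) * pd j (monomialFun 1 a) y)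
      + u / 2 * ((2 : ℝ) : ℂ) * monomialFun 1 a y) = monomialFun ((∑ j, a j : ℕ) + u) a := by
    funext y
    rw [sum_coord_mul_pd_monomialFun]
    simp only [monomialFun]
    push_cast
    ring
  rw [euler, polyDiff_monomialFun_apply_zero, polyDiff_monomialFun_apply_zero] at h
  simp only [Pi.zero_apply, Complex.ofReal_zero, zero_mul, sum_const_zero, zero_add,
    Complex.ofReal_ofNat] at h
  have hne : P.coeff a * ∏ j, ((a j).factorial : ℂ) ≠ 0 :=
    mul_ne_zero (MvPolynomial.mem_support_iff.mp ha)
      (prod_ne_zero_iff.mpr fun j _ => Nat.cast_ne_zero.mpr (a j).factorial_ne_zero)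
  have hv : v = (∑ j, a j : ℕ) + u := mul_right_cancel₀ hne (by linear_combination -h)
  rw [hv, add_sub_cancel_right]

theorem stmt1 (n : ℕ) (hn : 3 ≤ n) (ε : Fin n → ℝ)
    (u v : ℂ) (P : MvPolynomial (Fin n) ℂ) (hP : P ≠ 0)
    (hcov : IsCovariantSymbol ε ⟨n - 1, by omega⟩ u v P) :
    ∃ ℓ : ℕ, v - u = ℓ := by
  obtain ⟨a, ha⟩ := MvPolynomial.support_nonempty.mpr hP
  exact ⟨_, hcov.sub_eq_degree_of_mem_support ha⟩
end
end

section
/- Let n ≥ 2 and let V ⊆ ℝ^n be open with Y_V := V ∩ {x_n = 0} nonempty and connected. Given N ∈ ℕ and, for each multi-index α ∈ ℕ^n with |α| ≤ N, a smooth function a_α : Y_V → ℂ, define the operator D f := Σ_{|α| ≤ N} a_α · (∂^α f)|_{Y_V} for smooth f : V → ℂ. If for every smooth f : V → ℂ and every 1 ≤ k ≤ n−1 one has D(∂_k f) = ∂_k(D f) on Y_V (where ∂_k(D f) is the derivative of the function D f in the direction e_k within the hyperplane), then every coefficient a_α is constant on Y_V. (Step 2 of the proof of Theorems A and B: covariance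 under the translations along the hyperplane, which are Killing vector fields, forces constant coefficients.) -/
/-!
Test the commutation `D ∂ₖ = ∂ₖ D` at a point `y` of the hyperplane on the polynomial
`∏ i, (x i - y i) ^ q i`. Its derivatives `∂^m` at `y` vanish except for `m = q`, so the
Leibniz rule leaves only `q! · ∂ₖ a_q (y) = 0`. Thus each coefficient has vanishing derivatives
along the tangential directions `eₖ`, `k ≠ n`, which span the hyperplane; restricted to the
hyperplane it is a function with zero derivative on the connected open set `Y_V`, hence constant.
-/

open scoped BigOperators

noncomputable section

/-- The finite set of multi-indices `m : Fin n → ℕ` of total degree `|m| ≤ N`. -/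
def multiIdx (n N : ℕ) : Finset (Fin n → ℕ) :=
  (Finset.Iic (fun _ => N)).filter (fun m => ∑ j, m j ≤ N)

open Topology

lemma hasDerivAt_descFactorial_mul_sub_pow (q d : ℕ) (c t : ℝ) :
    HasDerivAt (fun s : ℝ => (q.descFactorial d : ℂ) * ((s : ℂ) - c) ^ (q - d))
      ((q.descFactorial (d + 1) : ℂ) * ((t : ℂ) - c) ^ (q - (d + 1))) t := by
  refine ((((hasDerivAt_id t).ofReal_comp.sub_const (c : ℂ)).pow (q - d)).const_mul
    (q.descFactorial d : ℂ)).congr_deriv ?_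
  rw [Nat.descFactorial_succ, Nat.sub_sub, id]
  push_cast
  ring

lemma pd_prod_apply {n : ℕ} {g g' : Fin n → ℝ → ℂ} (hg : ∀ i t, HasDerivAt (g i) (g' i t) t)
    (j : Fin n) :
    pd j (fun x => ∏ i, g i (x i)) = fun x => ∏ i, Function.update g j (g' j) i (x i) := by
  funext x
  have hprod := HasFDerivAt.finsetProd (u := Finset.univ) (g := fun i (y : Fin n → ℝ) => g i (y i))
    fun i _ => (hg i (x i)).hasFDerivAt.comp x (hasFDerivAt_apply i x)
  simp only [pd, hprod.fderiv, sum_apply, smul_apply,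
    ContinuousLinearMap.comp_apply, ContinuousLinearMap.proj_apply, Pi.single_apply,
    ContinuousLinearMap.toSpanSingleton_apply, ite_smul, one_smul, zero_smul, smul_eq_mul,
    mul_ite, mul_zero, Finset.sum_ite_eq', Finset.mem_univ, if_true]
  rw [← Finset.mul_prod_erase _ _ (Finset.mem_univ j), Function.update_self, mul_comm]
  exact congrArg _ (Finset.prod_congr rfl fun i hi => by
    rw [Function.update_of_ne (Finset.ne_of_mem_erase hi)])

/-- `monomialDeriv q d c = ∂^d (x ↦ ∏ i, (x i - c i) ^ q i)`, see `monoDiff_monomialDeriv`. -/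
def monomialDeriv {n : ℕ} (q d : Fin n → ℕ) (c : Fin n → ℝ) : (Fin n → ℝ) → ℂ :=
  fun x => ∏ i, ((q i).descFactorial (d i) : ℂ) * ((x i : ℂ) - c i) ^ (q i - d i)

section monomialDeriv

variable {n : ℕ} (q : Fin n → ℕ) (c : Fin n → ℝ)

lemma pd_monomialDeriv (d : Fin n → ℕ) (j : Fin n) :
    pd j (monomialDeriv q d c) = monomialDeriv q (d + Pi.single j 1) c := by
  unfold monomialDeriv
  rw [pd_prod_apply fun i t => hasDerivAt_descFactorial_mul_sub_pow _ _ _ t]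
  funext x
  refine Finset.prod_congr rfl fun i _ => ?_
  rcases eq_or_ne i j with rfl | hij
  · simp
  · simp [hij]

lemma iterate_pd_monomialDeriv (d : Fin n → ℕ) (j : Fin n) (r : ℕ) :
    (pd j)^[r] (monomialDeriv q d c) = monomialDeriv q (d + Pi.single j r) c := by
  induction r with
  | zero => simp
  | succ r ih =>
    rw [Function.iterate_succ_apply', ih, pd_monomialDeriv, add_assoc, ← Pi.single_add]

lemma foldr_iterate_pd_monomialDeriv (m d : Fin n → ℕ) (L : List (Fin n)) :
    L.foldr (fun j g => (pd j)^[m j] g) (monomialDeriv q d c)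
      = monomialDeriv q (d + (L.map fun j => Pi.single j (m j)).sum) c := by
  induction L with
  | nil => simp
  | cons j L ih =>
    rw [List.foldr_cons, ih, iterate_pd_monomialDeriv, List.map_cons, List.sum_cons, add_assoc,
      add_comm (List.sum _)]

lemma monoDiff_monomialDeriv (m d : Fin n → ℕ) :
    monoDiff m (monomialDeriv q d c) = monomialDeriv q (d + m) c := by
  rw [monoDiff, foldr_iterate_pd_monomialDeriv, ← Fin.sum_univ_def, Finset.univ_sum_single]

lemma monomialDeriv_self (d : Fin n → ℕ) :
    monomialDeriv q d c c = if d = q then ∏ i, ((q i).factorial : ℂ) else 0 := by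
  have hfactor : ∀ i, ((q i).descFactorial (d i) : ℂ) * ((c i : ℂ) - c i) ^ (q i - d i)
      = if d i = q i then ((q i).factorial : ℂ) else 0 := by
    intro i
    rw [sub_self]
    rcases lt_trichotomy (d i) (q i) with h | h | h
    · rw [zero_pow (by omega), if_neg h.ne, mul_zero]
    · rw [h, Nat.sub_self, pow_zero, Nat.descFactorial_self, if_pos rfl, mul_one]
    · rw [Nat.descFactorial_eq_zero_iff_lt.mpr h, if_neg h.ne', Nat.cast_zero, zero_mul]
  simp only [monomialDeriv, hfactor, Finset.prod_ite_zero, Finset.mem_univ, forall_const,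
    funext_iff]

lemma contDiff_monomialDeriv (d : Fin n → ℕ) : ContDiff ℝ (⊤ : ℕ∞) (monomialDeriv q d c) := by
  refine contDiff_prod fun i _ => contDiff_const.mul (ContDiff.pow ?_ _)
  exact (Complex.ofRealCLM.contDiff.comp (contDiff_apply ℝ ℝ i)).sub contDiff_const

end monomialDeriv

lemma hasLineDerivAt_sum_mul {E ι : Type*} [NormedAddCommGroup E] [NormedSpace ℝ E]
    {s : Finset ι} {a g : ι → E → ℂ} {a' g' : ι → ℂ} {x v : E}
    (ha : ∀ i ∈ s, HasLineDerivAt ℝ (a i) (a' i) x v)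
    (hg : ∀ i ∈ s, HasLineDerivAt ℝ (g i) (g' i) x v) :
    HasLineDerivAt ℝ (fun y => ∑ i ∈ s, a i y * g i y)
      (∑ i ∈ s, (a' i * g i x + a i x * g' i)) x v := by
  simpa [HasLineDerivAt] using HasDerivAt.fun_sum fun i hi => (ha i hi).mul (hg i hi)

theorem lineDeriv_coeff_eq_zero_of_commute {n : ℕ} {s : Finset (Fin n → ℕ)}
    {a : (Fin n → ℕ) → (Fin n → ℝ) → ℂ} {y : Fin n → ℝ} {k : Fin n}
    (ha : ∀ m ∈ s, LineDifferentiableAt ℝ (a m) y (Pi.single k 1))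
    (hcomm : ∀ f : (Fin n → ℝ) → ℂ, ContDiff ℝ (⊤ : ℕ∞) f →
      ∑ m ∈ s, a m y * monoDiff m (pd k f) y
        = lineDeriv ℝ (fun x => ∑ m ∈ s, a m x * monoDiff m f x) y (Pi.single k 1))
    {q : Fin n → ℕ} (hq : q ∈ s) :
    lineDeriv ℝ (a q) y (Pi.single k 1) = 0 := by
  set f := monomialDeriv q 0 y
  have hf : ∀ m, HasLineDerivAt ℝ (monoDiff m f) (monoDiff m (pd k f) y) y (Pi.single k 1) := by
    intro m
    have h := ((contDiff_monomialDeriv q y (0 + m)).differentiable (by simp) y).hasFDerivAt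
    rw [pd_monomialDeriv, monoDiff_monomialDeriv, monoDiff_monomialDeriv, add_right_comm,
      ← pd_monomialDeriv]
    exact h.hasLineDerivAt _
  have h := hcomm f (contDiff_monomialDeriv q y 0)
  rw [(hasLineDerivAt_sum_mul (fun m hm => (ha m hm).hasLineDerivAt) fun m _ => hf m).lineDeriv,
    Finset.sum_add_distrib, right_eq_add, Finset.sum_eq_single_of_mem q hq fun m _ hmq => by
      rw [monoDiff_monomialDeriv, zero_add, monomialDeriv_self, if_neg hmq, mul_zero],
    monoDiff_monomialDeriv, zero_add, monomialDeriv_self, if_pos rfl] at h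
  refine (mul_eq_zero.mp h).resolve_right ?_
  exact Finset.prod_ne_zero_iff.mpr fun i _ => Nat.cast_ne_zero.mpr (Nat.factorial_ne_zero _)

lemma coe_span_single_image_compl {ι R : Type*} [Fintype ι] [DecidableEq ι] [Semiring R] (i : ι) :
    (Submodule.span R ((fun k => Pi.single k (1 : R)) '' {i}ᶜ) : Set (ι → R)) = {x | x i = 0} := by
  ext x
  constructor
  · intro hx
    refine Submodule.span_le (p := LinearMap.ker (LinearMap.proj i)) |>.mpr ?_ hx
    rintro _ ⟨k, hk, rfl⟩
    exact Pi.single_eq_of_ne (Ne.symm hk) _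
  · intro hx
    rw [SetLike.mem_coe, ← Finset.univ_sum_single x]
    refine Submodule.sum_mem _ fun k _ => ?_
    rcases eq_or_ne k i with rfl | hk
    · rw [show x k = 0 from hx, Pi.single_zero]
      exact zero_mem _
    · rw [← mul_one (x k), ← smul_eq_mul, Pi.single_smul]
      exact Submodule.smul_mem _ _ (Submodule.subset_span ⟨k, hk, rfl⟩)

lemma DifferentiableWithinAt.lineDifferentiableAt_of_isOpen_inter {E F : Type*}
    [NormedAddCommGroup E] [NormedSpace ℝ E] [NormedAddCommGroup F] [NormedSpace ℝ F]
    {V : Set E} {H : Submodule ℝ E} {f : E → F} {x v : E}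
    (hf : DifferentiableWithinAt ℝ f (V ∩ H) x) (hV : IsOpen V) (hx : x ∈ V ∩ H) (hv : v ∈ H) :
    LineDifferentiableAt ℝ f x v := by
  refine ((hf.hasFDerivWithinAt.hasLineDerivWithinAt v).hasLineDerivAt' ?_).lineDifferentiableAt
  have hline : ∀ᶠ t : ℝ in 𝓝 0, x + t • v ∈ V :=
    ((continuous_const.add (continuous_id.smul continuous_const)).tendsto' 0 x (by simp)).eventually
      (hV.mem_nhds hx.1)
  exact hline.mono fun t ht => ⟨ht, H.add_mem hx.2 (H.smul_mem t hv)⟩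

theorem IsOpen.eq_of_lineDeriv_eq_zero_on_inter_span {E F : Type*} [NormedAddCommGroup E]
    [NormedSpace ℝ E] [NormedAddCommGroup F] [NormedSpace ℝ F] {V s : Set E} (hV : IsOpen V)
    (hconn : IsPreconnected (V ∩ Submodule.span ℝ s)) {f : E → F}
    (hf : DifferentiableOn ℝ f (V ∩ Submodule.span ℝ s))
    (hf' : ∀ x ∈ V ∩ Submodule.span ℝ s, ∀ v ∈ s, lineDeriv ℝ f x v = 0)
    {x y : E} (hx : x ∈ V ∩ Submodule.span ℝ s) (hy : y ∈ V ∩ Submodule.span ℝ s) :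
    f x = f y := by
  set H := Submodule.span ℝ s
  have hU : IsOpen ((↑) ⁻¹' V : Set H) := hV.preimage continuous_subtype_val
  have hUconn : IsPreconnected ((↑) ⁻¹' V : Set H) := by
    rw [← Topology.IsInducing.subtypeVal.isPreconnected_image]
    convert hconn using 1
    ext z
    simp [and_comm]
  have hdiff : DifferentiableOn ℝ (f ∘ (↑)) ((↑) ⁻¹' V : Set H) :=
    hf.comp H.subtypeL.differentiable.differentiableOn fun u hu => ⟨hu, u.2⟩
  have hzero : ∀ u ∈ ((↑) ⁻¹' V : Set H), fderiv ℝ (f ∘ (↑)) u = 0 := by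
    intro u hu
    have hdu := (hdiff u hu).differentiableAt (hU.mem_nhds hu)
    ext ⟨w, hw⟩
    induction hw using Submodule.span_induction with
    | mem v hv => rw [← hdu.lineDeriv_eq_fderiv]; exact hf' u ⟨hu, u.2⟩ v hv
    | zero => exact map_zero _
    | add v w hv hw hv0 hw0 =>
      rw [show (⟨v + w, H.add_mem hv hw⟩ : H) = ⟨v, hv⟩ + ⟨w, hw⟩ from rfl, map_add, hv0, hw0]
      simp
    | smul r v hv hv0 =>
      rw [show (⟨r • v, H.smul_mem r hv⟩ : H) = r • ⟨v, hv⟩ from rfl, map_smul, hv0]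
      simp
  exact hU.is_const_of_fderiv_eq_zero hUconn hdiff hzero (x := ⟨x, hx.2⟩) (y := ⟨y, hy.2⟩) hx.1 hy.1

theorem stmt6 (n : ℕ) (hn : 2 ≤ n) (V : Set (Fin n → ℝ)) (hV : IsOpen V)
    (hconn : IsConnected (V ∩ {x | x ⟨n - 1, by omega⟩ = 0}))
    (N : ℕ) (a : (Fin n → ℕ) → (Fin n → ℝ) → ℂ)
    (ha : ∀ m ∈ multiIdx n N,
      ContDiffOn ℝ (⊤ : ℕ∞) (a m) (V ∩ {x | x ⟨n - 1, by omega⟩ = 0}))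
    (D : ((Fin n → ℝ) → ℂ) → (Fin n → ℝ) → ℂ)
    (hD : ∀ f x, D f x = ∑ m ∈ multiIdx n N, a m x * monoDiff m f x)
    (hcomm : ∀ f : (Fin n → ℝ) → ℂ, ContDiffOn ℝ (⊤ : ℕ∞) f V →
      ∀ k : Fin n, k ≠ ⟨n - 1, by omega⟩ →
      ∀ x ∈ V, x ⟨n - 1, by omega⟩ = 0 →
        D (pd k f) x = lineDeriv ℝ (D f) x (Pi.single k 1)) :
    ∀ m ∈ multiIdx n N, ∀ x ∈ V ∩ {x | x ⟨n - 1, by omega⟩ = 0},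
      ∀ y ∈ V ∩ {x | x ⟨n - 1, by omega⟩ = 0}, a m x = a m y := by
  obtain rfl : D = fun f x => ∑ m ∈ multiIdx n N, a m x * monoDiff m f x := funext₂ hD
  set last : Fin n := ⟨n - 1, by omega⟩
  rw [← coe_span_single_image_compl (R := ℝ) last] at hconn ha ⊢
  intro q hq x hx y hy
  refine hV.eq_of_lineDeriv_eq_zero_on_inter_span hconn.isPreconnected
    ((ha q hq).differentiableOn (by simp)) ?_ hx hy
  rintro z hz _ ⟨k, hk, rfl⟩
  refine lineDeriv_coeff_eq_zero_of_commute (fun m hm => ?_)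
    (fun f hf => hcomm f hf.contDiffOn k hk z hz.1 ?_) hq
  · exact ((ha m hm).differentiableOn (by simp) z hz).lineDifferentiableAt_of_isOpen_inter hV hz
      (Submodule.subset_span ⟨k, hk, rfl⟩)
  · simpa [coe_span_single_image_compl] using hz.2
end
end

section
/- Let n ≥ 2, 0 ≤ p ≤ n−1, and let ε ∈ {−1,1}^n have ε_j = 1 for j ≤ p and ε_j = −1 for j > p (so ε_n = −1). Let ι_− : ℝ^n → ℂ^n be the totally real embedding ι_−(w) = (w_1,…,w_p, i w_{p+1},…, i w_n). Then for every entire function F : ℂ^n → ℂ, every μ ∈ ℂ, ℓ ∈ ℕ and every w ∈ ℝ^n: (𝒟^μ_ℓ[ε](F ∘ ι_−))(w) = i^ℓ · (𝒟^μ_ℓ[ℂ] F)(ι_−(w)). Equivalently, the operator on the totally real form ℝ^{p,q}_− induced by restriction of the holomorphic Juhl operator 𝒟^μ_ℓ[ℂ] equals e^{−πiℓ/2} (𝒟^μ_ℓ)_{ℝ^{p,q}_−}. (Scalar constituent of Lemma 6.1.) -/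
/-!
Write `ι` for the totally real embedding, `ι(w)_j = c_j w_j` with `c_j = 1` for `j < p` and
`c_j = i` otherwise. For entire `G` the chain rule gives `∂_j (G ∘ ι) = c_j (∂_j G) ∘ ι`, so each
`∂_n` contributes a factor `i`, and since `ε_j c_j² = 1` and `-ε_n = 1` the signed Laplacian of
`G ∘ ι` is `(-Σ_{j<n} ∂_j² G) ∘ ι`, i.e. minus the holomorphic one. The `k`-th term of the Juhl
operator thus picks up `i^(ℓ-2k) (-1)^k = i^ℓ`. Iterating the chain rule requires the complex
partial derivatives of an entire function on `ℂⁿ` to be entire again; this follows by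
differentiating Cauchy's integral formula along complex lines under the integral sign.
-/

open scoped BigOperators

noncomputable section

/-- The `j`-th complex partial derivative. -/
def pdC {n : ℕ} (j : Fin n) (F : (Fin n → ℂ) → ℂ) : (Fin n → ℂ) → ℂ :=
  fun z => fderiv ℂ F z (Pi.single j 1)

/-- The holomorphic Laplacian `-∑_{j ≠ i₀} ∂_j²`. -/
def sLapC {n : ℕ} (i₀ : Fin n) (F : (Fin n → ℂ) → ℂ) : (Fin n → ℂ) → ℂ :=
  fun z => -∑ j ∈ Finset.univ.erase i₀, pdC j (pdC j F) z

/-- The holomorphic Juhl operator `𝒟^μ_ℓ[ℂ]` with distinguished coordinate `i₀`. -/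
def juhlOpC {n : ℕ} (i₀ : Fin n) (μ : ℂ) (ℓ : ℕ)
    (F : (Fin n → ℂ) → ℂ) : (Fin n → ℂ) → ℂ :=
  fun z => ∑ k ∈ Finset.range (ℓ / 2 + 1),
    akCoeff μ ℓ k * ((sLapC i₀)^[k] ((pdC i₀)^[ℓ - 2 * k] F)) z

open Metric Complex Real

section EntireFunction

variable {E F : Type*} [NormedAddCommGroup E] [NormedSpace ℂ E]
  [NormedAddCommGroup F] [NormedSpace ℂ F] {G : E → F}

theorem Differentiable.norm_fderiv_le_of_forall_mem_closedBall_norm_le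
    (hG : Differentiable ℂ G) {x : E} {R M : ℝ} (hR : 0 < R)
    (hM : ∀ y ∈ closedBall x R, ‖G y‖ ≤ M) : ‖fderiv ℂ G x‖ ≤ M / R := by
  have hM₀ : 0 ≤ M := (norm_nonneg _).trans (hM x (mem_closedBall_self hR.le))
  refine ContinuousLinearMap.opNorm_le_bound _ (by positivity) fun u => ?_
  rcases eq_or_ne u 0 with rfl | hu
  · simp
  have hu₀ : 0 < ‖u‖ := norm_pos_iff.mpr hu
  have hslice : Differentiable ℂ fun s : ℂ => G (x + s • u) :=
    hG.comp ((differentiable_id.smul_const u).const_add x)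
  have hsphere : ∀ s ∈ sphere (0 : ℂ) (R / ‖u‖), ‖G (x + s • u)‖ ≤ M := fun s hs => by
    refine hM _ ?_
    rw [mem_sphere_zero_iff_norm] at hs
    rw [mem_closedBall, dist_eq_norm, add_sub_cancel_left, norm_smul, hs,
      div_mul_cancel₀ _ hu₀.ne']
  have := norm_deriv_le_of_forall_mem_sphere_norm_le (by positivity) hslice.diffContOnCl hsphere
  rw [((hG x).hasFDerivAt.hasLineDerivAt u).deriv] at this
  calc ‖fderiv ℂ G x u‖ ≤ M / (R / ‖u‖) := this
    _ = M / R * ‖u‖ := by field_simp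

theorem Differentiable.circleIntegral_comp_add_smul [CompleteSpace F] (hG : Differentiable ℂ G)
    (x v : E) :
    ∮ z in C(0, 1), (1 / z ^ 2) • G (x + z • v) = (2 * π * I) • fderiv ℂ G x v := by
  have hslice : Differentiable ℂ fun s : ℂ => G (x + s • v) :=
    hG.comp ((differentiable_id.smul_const v).const_add x)
  simpa [((hG x).hasFDerivAt.hasLineDerivAt v).deriv] using
    hslice.diffContOnCl.deriv_eq_smul_circleIntegral (c := 0) one_pos

theorem closedBall_add_smul_subset {x x₀ v : E} {c : ℂ} (hx : dist x x₀ ≤ 1) (hc : ‖c‖ = 1) :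
    closedBall (x + c • v) 1 ⊆ closedBall x₀ (‖v‖ + 2) := by
  refine closedBall_subset_closedBall' ?_
  calc 1 + dist (x + c • v) x₀ ≤ 1 + (dist (x + c • v) x + dist x x₀) := by
        gcongr; exact dist_triangle _ _ _
    _ ≤ ‖v‖ + 2 := by
        rw [dist_eq_norm, add_sub_cancel_left, norm_smul, hc, one_mul]; linarith

theorem Differentiable.differentiable_fderiv_apply [FiniteDimensional ℂ E] [CompleteSpace F]
    [SecondCountableTopology F] (hG : Differentiable ℂ G) (v : E) :
    Differentiable ℂ fun x => fderiv ℂ G x v := by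
  borelize E
  intro x₀
  set k : ℝ → ℂ := fun θ => circleMap 0 1 θ * I * (1 / circleMap 0 1 θ ^ 2)
  have hk : Continuous k :=
    ((continuous_circleMap 0 1).mul continuous_const).mul (continuous_const.div
      ((continuous_circleMap 0 1).pow 2) fun _ => pow_ne_zero 2 (circleMap_ne_center one_ne_zero))
  have hk_norm : ∀ θ, ‖k θ‖ = 1 := fun θ => by simp [k]
  have hformula : (fun x => fderiv ℂ G x v) = fun x =>
      (2 * π * I)⁻¹ • ∫ θ in (0 : ℝ)..2 * π, k θ • G (x + circleMap 0 1 θ • v) := by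
    funext x
    rw [eq_inv_smul_iff₀ two_pi_I_ne_zero, ← hG.circleIntegral_comp_add_smul]
    simp only [circleIntegral, deriv_circleMap, smul_smul, k]
  have hcircle : ∀ x, Continuous fun θ => x + circleMap 0 1 θ • v := fun x =>
    continuous_const.add ((continuous_circleMap 0 1).smul continuous_const)
  have hintegrand : ∀ x, Continuous fun θ => k θ • G (x + circleMap 0 1 θ • v) := fun x =>
    hk.smul (hG.continuous.comp (hcircle x))
  -- Differentiate under the integral sign; the Cauchy estimate on the unit balls around the
  -- points of the circles bounds the derivative of the integrand uniformly for `x` near `x₀`.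
  obtain ⟨M, hM⟩ := (isCompact_closedBall x₀ (‖v‖ + 2)).exists_bound_of_continuousOn
    hG.continuous.continuousOn
  have hintegral := intervalIntegral.hasFDerivAt_integral_of_dominated_of_fderiv_le
    (μ := MeasureTheory.volume) (bound := fun _ => M) (ball_mem_nhds x₀ one_pos)
    (Filter.Eventually.of_forall fun x => (hintegrand x).aestronglyMeasurable)
    ((hintegrand x₀).intervalIntegrable 0 (2 * π))
    (hk.aestronglyMeasurable.smul
      ((measurable_fderiv ℂ G).comp (hcircle x₀).measurable).aestronglyMeasurable)
    (MeasureTheory.ae_of_all _ fun θ _ x hx => by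
      rw [norm_smul, hk_norm, one_mul]
      simpa using hG.norm_fderiv_le_of_forall_mem_closedBall_norm_le one_pos fun y hy =>
        hM y (closedBall_add_smul_subset (mem_ball.mp hx).le (by simp) hy))
    intervalIntegrable_const
    (MeasureTheory.ae_of_all _ fun θ _ x _ =>
      ((hG _).hasFDerivAt.comp x ((hasFDerivAt_id x).add_const _)).const_smul (k θ))
  rw [hformula]
  exact hintegral.differentiableAt.const_smul _

end EntireFunction

theorem iterate_comp_smul_of_intertwining {X Y : Type*} (P : (Y → ℂ) → Prop)
    {S : (Y → ℂ) → Y → ℂ} {T : (X → ℂ) → X → ℂ} {ι : X → Y} {a : ℂ}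
    (hP_smul : ∀ (c : ℂ) G, P G → P (c • G)) (hP_S : ∀ G, P G → P (S G))
    (hS_smul : ∀ (c : ℂ) G, P G → S (c • G) = c • S G)
    (hT : ∀ G, P G → T (G ∘ ι) = (a • S G) ∘ ι) (k : ℕ) :
    ∀ (c : ℂ) G, P G → T^[k] ((c • G) ∘ ι) = ((c * a ^ k) • S^[k] G) ∘ ι := by
  induction k with
  | zero => simp
  | succ k ih =>
    intro c G hG
    rw [Function.iterate_succ_apply, hT _ (hP_smul c G hG), hS_smul c G hG, smul_smul,
      ih _ _ (hP_S G hG), Function.iterate_succ_apply, pow_succ', mul_comm a c, mul_assoc]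

section TotallyReal

variable {n : ℕ}

theorem differentiable_pdC {G : (Fin n → ℂ) → ℂ} (hG : Differentiable ℂ G) (j : Fin n) :
    Differentiable ℂ (pdC j G) :=
  hG.differentiable_fderiv_apply _

theorem differentiable_sLapC (i₀ : Fin n) {G : (Fin n → ℂ) → ℂ} (hG : Differentiable ℂ G) :
    Differentiable ℂ (sLapC i₀ G) :=
  (Differentiable.fun_sum fun j _ => differentiable_pdC (differentiable_pdC hG j) j).neg

theorem pdC_const_smul {G : (Fin n → ℂ) → ℂ} (hG : Differentiable ℂ G) (j : Fin n) (c : ℂ) :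
    pdC j (c • G) = c • pdC j G := by
  funext z
  simp [pdC, fderiv_const_smul (hG z)]

theorem sLapC_const_smul (i₀ : Fin n) {G : (Fin n → ℂ) → ℂ} (hG : Differentiable ℂ G) (c : ℂ) :
    sLapC i₀ (c • G) = c • sLapC i₀ G := by
  funext z
  simp only [sLapC, pdC_const_smul hG, pdC_const_smul (differentiable_pdC hG _), Pi.smul_apply,
    smul_eq_mul, ← Finset.mul_sum, mul_neg]

def totallyRealCoeff (p : ℕ) (j : Fin n) : ℂ := if (j : ℕ) < p then 1 else I

def totallyRealEmb (p : ℕ) : (Fin n → ℝ) →L[ℝ] (Fin n → ℂ) :=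
  ContinuousLinearMap.pi fun j =>
    totallyRealCoeff p j • ofRealCLM.comp (ContinuousLinearMap.proj j)

theorem totallyRealEmb_apply (p : ℕ) (w : Fin n → ℝ) :
    totallyRealEmb p w = fun j : Fin n => if (j : ℕ) < p then (w j : ℂ) else I * w j := by
  funext j
  by_cases hj : (j : ℕ) < p <;> simp [totallyRealEmb, totallyRealCoeff, hj]

theorem totallyRealEmb_single (p : ℕ) (j : Fin n) :
    totallyRealEmb p (Pi.single j 1) = totallyRealCoeff p j • Pi.single j 1 := by
  funext i
  rcases eq_or_ne i j with rfl | hij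
  · simp [totallyRealEmb_apply, totallyRealCoeff]
  · simp [totallyRealEmb_apply, hij]

theorem pd_comp_totallyRealEmb (p : ℕ) {G : (Fin n → ℂ) → ℂ} (hG : Differentiable ℂ G)
    (j : Fin n) :
    pd j (G ∘ totallyRealEmb p) = (totallyRealCoeff p j • pdC j G) ∘ totallyRealEmb p := by
  funext w
  have h := ((hG (totallyRealEmb p w)).hasFDerivAt.restrictScalars ℝ).comp w
    (totallyRealEmb p).hasFDerivAt
  simp [pd, pdC, h.fderiv, totallyRealEmb_single]

theorem sLap_comp_totallyRealEmb {p : ℕ} {ε : Fin n → ℝ}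
    (hε : ∀ j : Fin n, ε j = if (j : ℕ) < p then 1 else -1) {i₀ : Fin n} (hi₀ : p ≤ i₀)
    {G : (Fin n → ℂ) → ℂ} (hG : Differentiable ℂ G) :
    sLap ε i₀ (G ∘ totallyRealEmb p) = ((-1 : ℂ) • sLapC i₀ G) ∘ totallyRealEmb p := by
  have hεc : ∀ j, (ε j : ℂ) * (totallyRealCoeff p j * totallyRealCoeff p j) = 1 := fun j => by
    rw [hε j, totallyRealCoeff]; split_ifs <;> simp
  have hεi₀ : (ε i₀ : ℂ) = -1 := by rw [hε i₀, if_neg (by omega)]; simp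
  funext w
  simp only [sLap, sLapC, pd_comp_totallyRealEmb p hG,
    pd_comp_totallyRealEmb p ((differentiable_pdC hG _).const_smul _),
    pdC_const_smul (differentiable_pdC hG _), Function.comp_apply, Pi.smul_apply, smul_eq_mul,
    ← mul_assoc, hεc, hεi₀, one_mul]
  simp

theorem juhlOp_comp_totallyRealEmb {p : ℕ} {ε : Fin n → ℝ}
    (hε : ∀ j : Fin n, ε j = if (j : ℕ) < p then 1 else -1) {i₀ : Fin n} (hi₀ : p ≤ i₀)
    {F : (Fin n → ℂ) → ℂ} (hF : Differentiable ℂ F) (μ : ℂ) (ℓ : ℕ) (w : Fin n → ℝ) :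
    juhlOp ε i₀ μ ℓ (F ∘ totallyRealEmb p) w
      = I ^ ℓ * juhlOpC i₀ μ ℓ F (totallyRealEmb p w) := by
  have hpd := iterate_comp_smul_of_intertwining (Differentiable ℂ) (T := pd i₀)
    (ι := totallyRealEmb p) (a := I)
    (fun c _ hG => hG.const_smul c) (fun _ hG => differentiable_pdC hG i₀)
    (fun c _ hG => pdC_const_smul hG i₀ c) (fun _ hG => by
      rw [pd_comp_totallyRealEmb p hG, totallyRealCoeff, if_neg (by omega)])
  have hsLap := iterate_comp_smul_of_intertwining (Differentiable ℂ) (T := sLap ε i₀)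
    (S := sLapC i₀)
    (fun c _ hG => hG.const_smul c) (fun _ hG => differentiable_sLapC i₀ hG)
    (fun c _ hG => sLapC_const_smul i₀ hG c) (fun _ hG => sLap_comp_totallyRealEmb hε hi₀ hG)
  simp only [juhlOp, juhlOpC, Finset.mul_sum]
  refine Finset.sum_congr rfl fun k hk => ?_
  have h2k : 2 * k ≤ ℓ := by have := Finset.mem_range.mp hk; omega
  have hI : I ^ (ℓ - 2 * k) * (-1) ^ k = I ^ ℓ := by
    rw [← I_sq, ← pow_mul, ← pow_add, Nat.sub_add_cancel h2k]
  have hF' : Differentiable ℂ ((pdC i₀)^[ℓ - 2 * k] F) :=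
    Function.Iterate.rec _ hF (fun G hG => differentiable_pdC hG i₀) _
  rw [← one_smul ℂ F, hpd _ _ _ hF, one_smul, hsLap _ _ _ hF', one_mul]
  simp only [Function.comp_apply, Pi.smul_apply, smul_eq_mul, ← hI]
  ring

end TotallyReal

theorem stmt8 (n p : ℕ) (hn : 2 ≤ n) (hp : p ≤ n - 1) (ε : Fin n → ℝ)
    (hε : ∀ j : Fin n, ε j = if (j : ℕ) < p then 1 else -1)
    (F : (Fin n → ℂ) → ℂ) (hF : Differentiable ℂ F) (μ : ℂ) (ℓ : ℕ) (w : Fin n → ℝ) :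
    juhlOp ε ⟨n - 1, by omega⟩ μ ℓ
        (fun y => F (fun j => if (j : ℕ) < p then (y j : ℂ) else Complex.I * y j)) w
      = Complex.I ^ ℓ * juhlOpC ⟨n - 1, by omega⟩ μ ℓ F
          (fun j => if (j : ℕ) < p then (w j : ℂ) else Complex.I * w j) := by
  simp only [← totallyRealEmb_apply]
  exact juhlOp_comp_totallyRealEmb hε hp hF μ ℓ w
end
end

section
/- For every μ ∈ ℂ and ℓ ∈ ℕ, the renormalized Gegenbauer polynomial C̃^μ_ℓ satisfies the Gegenbauer differential equation: (1 − t²)·(C̃^μ_ℓ)″(t) − (2μ+1)·t·(C̃^μ_ℓ)′(t) + ℓ(ℓ+2μ)·C̃^μ_ℓ(t) = 0, as an identity of polynomials in ℂ[t]. -/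
open scoped BigOperators

noncomputable section

open Polynomial

/-- The renormalized Gegenbauer polynomial `C̃^μ_ℓ(t) = ∑_k a_k(μ,ℓ) t^{ℓ-2k}`. -/
def gegenbauer (μ : ℂ) (ℓ : ℕ) : Polynomial ℂ :=
  ∑ k ∈ Finset.range (ℓ / 2 + 1), Polynomial.C (akCoeff μ ℓ k) * Polynomial.X ^ (ℓ - 2 * k)

/-- Action of the Gegenbauer operator on a monomial. -/
lemma term_eq (c L a : ℂ) (m : ℕ) :
    (1 - X^2) * derivative (derivative (C a * X^m))
      - C c * X * derivative (C a * X^m)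
      + C L * (C a * X^m)
    = C (a * m * ((m-1:ℕ):ℂ)) * X^(m-2)
      + C (a * (L - (m:ℂ) * ((m-1:ℕ):ℂ) - c * m)) * X^m := by
  match m with
  | 0 => simp; ring
  | 1 => simp [derivative_C_mul_X_pow]; ring
  | (n+2) =>
    simp only [derivative_C_mul_X_pow, show n+2-1 = n+1 from rfl, show n+1-1 = n from rfl,
      Nat.add_sub_cancel]
    simp only [Nat.cast_add, Nat.cast_ofNat, Nat.cast_one, C_mul, C_add, C_sub, C_1, map_ofNat]
    ring

lemma cast_pred_mul (m : ℕ) : (m:ℂ) * ((m-1:ℕ):ℂ) = (m:ℂ) * ((m:ℂ)-1) := by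
  cases m with
  | zero => simp
  | succ n => push_cast [Nat.succ_sub_one]; ring

/-- The key recurrence between consecutive coefficients. -/
lemma akCoeff_rec (μ : ℂ) (ℓ k : ℕ) (hk : 2*(k+1) ≤ ℓ) :
    akCoeff μ ℓ k * ((ℓ-2*k:ℕ):ℂ) * ((ℓ-2*k-1:ℕ):ℂ)
    + akCoeff μ ℓ (k+1) *
      ((ℓ:ℂ)*((ℓ:ℂ)+2*μ) - ((ℓ-2*(k+1):ℕ):ℂ) * (((ℓ-2*(k+1):ℕ):ℂ)-1)
        - (2*μ+1)*((ℓ-2*(k+1):ℕ):ℂ)) = 0 := by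
  obtain ⟨n, rfl⟩ : ∃ n, ℓ = n + 2*k + 2 := ⟨ℓ - 2*k - 2, by omega⟩
  have e1 : n + 2*k + 2 - 2*k = n + 2 := by omega
  have e2 : n + 2*k + 2 - 2*(k+1) = n := by omega
  have e3 : n + 2*k + 2 - k = n + k + 2 := by omega
  have e4 : n + 2*k + 2 - (k+1) = n + k + 1 := by omega
  have e5 : n + 2*k + 2 - 2*k - 1 = n + 1 := by omega
  have hle : (n + 2*k + 2 + 1) / 2 ≤ n + k + 1 := by omega
  have hprod : ∏ j ∈ Finset.Ico ((n + 2*k + 2 + 1) / 2) (n + k + 2), (μ + (j : ℂ))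
      = (∏ j ∈ Finset.Ico ((n + 2*k + 2 + 1) / 2) (n + k + 1), (μ + (j : ℂ)))
        * (μ + ((n + k + 1 : ℕ) : ℂ)) := by
    rw [show n + k + 2 = (n + k + 1) + 1 from rfl, Finset.prod_Ico_succ_top hle]
  set P := ∏ j ∈ Finset.Ico ((n + 2*k + 2 + 1) / 2) (n + k + 1), (μ + (j : ℂ)) with hP
  simp only [akCoeff, e1, e2, e3, e4, e5, hprod]
  have hk0 : ((Nat.factorial k : ℂ)) ≠ 0 := Nat.cast_ne_zero.mpr (Nat.factorial_ne_zero k)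
  have hn0 : ((Nat.factorial n : ℂ)) ≠ 0 := Nat.cast_ne_zero.mpr (Nat.factorial_ne_zero n)
  have hfs : (Nat.factorial (n+2) : ℂ) = (n+2)*(n+1)*(Nat.factorial n) := by
    rw [Nat.factorial_succ, Nat.factorial_succ]; push_cast; ring
  have hfk : (Nat.factorial (k+1) : ℂ) = (k+1)*(Nat.factorial k) := by
    rw [Nat.factorial_succ]; push_cast; ring
  rw [hfs, hfk]
  have hn2 : ((n:ℂ)+2) ≠ 0 := by
    have : ((n+2:ℕ):ℂ) ≠ 0 := Nat.cast_ne_zero.mpr (by omega)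
    push_cast at this; exact this
  have hn1 : ((n:ℂ)+1) ≠ 0 := by
    have : ((n+1:ℕ):ℂ) ≠ 0 := Nat.cast_ne_zero.mpr (by omega)
    push_cast at this; exact this
  have hk1 : ((k:ℂ)+1) ≠ 0 := by
    have : ((k+1:ℕ):ℂ) ≠ 0 := Nat.cast_ne_zero.mpr (by omega)
    push_cast at this; exact this
  have h20 : ((2:ℂ))^n ≠ 0 := pow_ne_zero _ two_ne_zero
  push_cast
  field_simp
  ring

theorem stmt16 (μ : ℂ) (ℓ : ℕ) :
    (1 - Polynomial.X ^ 2) * derivative (derivative (gegenbauer μ ℓ))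
      - Polynomial.C (2 * μ + 1) * Polynomial.X * derivative (gegenbauer μ ℓ)
      + Polynomial.C ((ℓ : ℂ) * ((ℓ : ℂ) + 2 * μ)) * gegenbauer μ ℓ = 0 := by
  rw [gegenbauer]
  rw [derivative_sum, derivative_sum, Finset.mul_sum, Finset.mul_sum, Finset.mul_sum,
    ← Finset.sum_sub_distrib, ← Finset.sum_add_distrib]
  have hterm : ∀ k ∈ Finset.range (ℓ/2 + 1),
      ((1 - X^2) * derivative (derivative (C (akCoeff μ ℓ k) * X^(ℓ - 2*k)))
        - C (2*μ+1) * X * derivative (C (akCoeff μ ℓ k) * X^(ℓ - 2*k))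
        + C ((ℓ:ℂ)*((ℓ:ℂ)+2*μ)) * (C (akCoeff μ ℓ k) * X^(ℓ - 2*k)))
      = C (akCoeff μ ℓ k * ((ℓ-2*k:ℕ):ℂ) * ((ℓ-2*k-1:ℕ):ℂ)) * X^(ℓ-2*k-2)
        + C (akCoeff μ ℓ k * ((ℓ:ℂ)*((ℓ:ℂ)+2*μ) - ((ℓ-2*k:ℕ):ℂ) * ((ℓ-2*k-1:ℕ):ℂ)
            - (2*μ+1) * ((ℓ-2*k:ℕ):ℂ))) * X^(ℓ-2*k) := fun k _ => term_eq _ _ _ _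
  rw [Finset.sum_congr rfl hterm, Finset.sum_add_distrib]
  -- first sum: drop the vanishing top term
  rw [Finset.sum_range_succ]
  have htop : (C (akCoeff μ ℓ (ℓ/2) * ((ℓ-2*(ℓ/2):ℕ):ℂ) * ((ℓ-2*(ℓ/2)-1:ℕ):ℂ))
      * X^(ℓ-2*(ℓ/2)-2) : Polynomial ℂ) = 0 := by
    have : ℓ - 2*(ℓ/2) = 0 ∨ ℓ - 2*(ℓ/2) - 1 = 0 := by omega
    rcases this with h | h <;> simp [h]
  rw [htop, add_zero]
  -- second sum: peel off the k = 0 term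
  rw [Finset.sum_range_succ']
  have hzero : (C (akCoeff μ ℓ 0 * ((ℓ:ℂ)*((ℓ:ℂ)+2*μ) - ((ℓ-2*0:ℕ):ℂ) * ((ℓ-2*0-1:ℕ):ℂ)
      - (2*μ+1) * ((ℓ-2*0:ℕ):ℂ))) * X^(ℓ-2*0) : Polynomial ℂ) = 0 := by
    have h1 : ℓ - 2*0 = ℓ := by omega
    rw [h1, cast_pred_mul]
    have : (ℓ:ℂ)*((ℓ:ℂ)+2*μ) - (ℓ:ℂ) * ((ℓ:ℂ)-1) - (2*μ+1) * (ℓ:ℂ) = 0 := by ring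
    rw [this]; simp
  rw [hzero, add_zero, ← Finset.sum_add_distrib]
  apply Finset.sum_eq_zero
  intro k hk
  have hk' : 2*(k+1) ≤ ℓ := by
    have := Finset.mem_range.mp hk; omega
  have hexp : ℓ - 2*k - 2 = ℓ - 2*(k+1) := by omega
  rw [hexp, ← add_mul, ← C_add]
  have : akCoeff μ ℓ k * ((ℓ-2*k:ℕ):ℂ) * ((ℓ-2*k-1:ℕ):ℂ)
      + akCoeff μ ℓ (k+1) * ((ℓ:ℂ)*((ℓ:ℂ)+2*μ) - ((ℓ-2*(k+1):ℕ):ℂ) * ((ℓ-2*(k+1)-1:ℕ):ℂ)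
          - (2*μ+1) * ((ℓ-2*(k+1):ℕ):ℂ)) = 0 := by
    rw [cast_pred_mul]
    exact akCoeff_rec μ ℓ k hk'
  rw [this]; simp
end
end
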